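/- For a prime p ≥ 3, if v is a word of length greater than p^2, then v^p is not a prefix of the sequence (a_{p;10}(n))_{n≥0}; consequently this sequence is not purely morphic. -/

import Mathlib

/-- Number of occurrences of the word `w` as a factor of the word `x`. -/
def occCount (w x : List ℕ) : ℕ :=
  (List.range (x.length + 1)).countP (fun i => decide (w <+: x.drop i))

/-- Base-`m` expansion of `n`, most significant digit first, with `0` written as the digit `0`. -/
def baseExp (m n : ℕ) : List ℕ :=
  if n = 0 then [0] else (Nat.digits m n).reverse

/-- `e_{m;w}(n)`: number of occurrences of `w` in the base-`m` expansion of `n`. -/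
def eCount (m : ℕ) (w : List ℕ) (n : ℕ) : ℕ := occCount w (baseExp m n)

/-- `a_{m;w}(n) = e_{m;w}(n) mod m`. -/
def aSeq (m : ℕ) (w : List ℕ) (n : ℕ) : ℕ := eCount m w n % m

/-- The value `(w)_m` of the digit string `w` in base `m`. -/
def wordVal (m : ℕ) (w : List ℕ) : ℕ := w.foldl (fun acc d => acc * m + d) 0

/-- The finite word `v` is a prefix of the infinite sequence `s`. -/
def IsPrefixSeq (v : List ℕ) (s : ℕ → ℕ) : Prop := ∀ n < v.length, s n = v.getD n 0

/-- Length of the image under the morphism `φ` of the first `n` letters of `s`. -/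
def morphPrefixLen (φ : ℕ → List ℕ) (s : ℕ → ℕ) (n : ℕ) : ℕ :=
  (Finset.range n).sum fun j => (φ (s j)).length

/-- The infinite sequence `s` is a fixed point of the morphism `φ` (extended by
concatenation to infinite words). -/
def IsMorphFixedPoint (φ : ℕ → List ℕ) (s : ℕ → ℕ) : Prop :=
  ∀ n : ℕ, ∀ i < (φ (s n)).length,
    s (morphPrefixLen φ s n + i) = (φ (s n)).getD i 0

/-- The sequence `s` over the alphabet `{0,...,p-1}` is purely morphic: it is a fixed
point of a non-erasing morphism of `{0,...,p-1}*`, prolongable on the first letter. -/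
def PurelyMorphic (p : ℕ) (s : ℕ → ℕ) : Prop :=
  ∃ φ : ℕ → List ℕ,
    (∀ c < p, φ c ≠ [] ∧ ∀ d ∈ φ c, d < p) ∧
    2 ≤ (φ (s 0)).length ∧
    IsMorphFixedPoint φ s

/-!
If `v ^ p` with `L = |v| ≥ p` is a prefix, then `a (n) = a (n + L)` whenever `n + L < p L`.
Write `L = b p^(k+1) + r` with `1 ≤ b < p` and `r < p^(k+1)`. The count of `10` is additive over
concatenations of expansions, up to one occurrence at the junction, and `e (p^j) = 1`. Comparing
`n = 0` with `n = p^(k+1)` when `b + 1 < p`, or `n = p^(k+1)` with `n = p^(k+2)` when `b + 1 = p`,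
yields two incompatible values of `e (r) mod p` (here `p ≥ 3` is used).

If `a` were the fixed point of a non-erasing morphism `φ`, then since it begins with `0^p` it
would begin with `(φ^j (0))^p` for every `j`, and `|φ (0)| ≥ 2` makes these words arbitrarily
long.
-/

lemma occCount_cons (w : List ℕ) (a : ℕ) (l : List ℕ) :
    occCount w (a :: l) = (if w <+: a :: l then 1 else 0) + occCount w l := by
  unfold occCount
  rw [List.length_cons, List.range_succ_eq_map, List.countP_cons, List.countP_map]
  simp only [Function.comp_def, List.drop_succ_cons, List.drop_zero]
  by_cases h : w <+: a :: l <;> simp [h, Nat.add_comm]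

lemma occCount_append_singleton (w l : List ℕ) (d : ℕ) :
    occCount w (l ++ [d]) = occCount w l + if w <:+ l ++ [d] then 1 else 0 := by
  induction l with
  | nil =>
    rw [List.nil_append, occCount_cons]
    by_cases h : w = [] <;> simp [occCount, h, List.suffix_cons_iff, List.prefix_cons_iff]
  | cons a l ih =>
    rw [List.cons_append, occCount_cons, ih, occCount_cons]
    have hpre := List.prefix_concat_iff (l₁ := w) (l₂ := a :: l) (a := d)
    rw [List.cons_append] at hpre
    -- An occurrence in `a :: (l ++ [d])` lies in `a :: l` or in `l ++ [d]`, or is the whole word.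
    by_cases hw : w = a :: (l ++ [d])
    · have h1 : ¬ w <+: a :: l := fun h => by simpa [hw] using h.length_le
      have h2 : ¬ w <:+ l ++ [d] := fun h => by simpa [hw] using h.length_le
      rw [if_pos (hpre.2 (.inl hw)), if_pos (List.suffix_cons_iff.2 (.inl hw)), if_neg h1,
        if_neg h2]
      omega
    · simp only [hpre, List.suffix_cons_iff, hw, false_or]
      omega

lemma baseExp_of_lt {p n : ℕ} (hn : n < p) : baseExp p n = [n] := by
  unfold baseExp
  split_ifs with h
  · rw [h]
  · rw [Nat.digits_of_lt p n h hn, List.reverse_singleton]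

lemma baseExp_mul_add {p m d : ℕ} (hp : 2 ≤ p) (hm : 0 < m) (hd : d < p) :
    baseExp p (p * m + d) = baseExp p m ++ [d] := by
  have hpos : 0 < p * m + d := by positivity
  unfold baseExp
  rw [if_neg hpos.ne', if_neg hm.ne', Nat.digits_def' hp hpos, List.reverse_cons]
  congr 3
  · rw [Nat.mul_add_div (by omega), Nat.div_eq_of_lt hd, Nat.add_zero]
  · rw [Nat.mul_add_mod, Nat.mod_eq_of_lt hd]

lemma getLast?_baseExp {p : ℕ} (hp : 2 ≤ p) (m : ℕ) :
    (baseExp p m).getLast? = some (m % p) := by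
  rcases lt_or_ge m p with hm | hm
  · rw [baseExp_of_lt hm, Nat.mod_eq_of_lt hm]
    rfl
  · have hsplit : m = p * (m / p) + m % p := (Nat.div_add_mod m p).symm
    rw [hsplit, baseExp_mul_add hp (Nat.div_pos hm (by omega)) (Nat.mod_lt m (by omega)),
      List.getLast?_concat, Nat.mul_add_mod, Nat.mod_mod]

lemma eCount_of_lt {p n : ℕ} (hn : n < p) : eCount p [1, 0] n = 0 := by
  rw [eCount, baseExp_of_lt hn, occCount_cons]
  simp [occCount]

lemma eCount_mul_add {p : ℕ} (hp : 2 ≤ p) (m : ℕ) {d : ℕ} (hd : d < p) :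
    eCount p [1, 0] (p * m + d) = eCount p [1, 0] m + if m % p = 1 ∧ d = 0 then 1 else 0 := by
  rcases Nat.eq_zero_or_pos m with rfl | hm
  · simp [eCount_of_lt hd, eCount_of_lt (by omega : 0 < p)]
  have hsuffix : [1, 0] <:+ baseExp p m ++ [d] ↔ m % p = 1 ∧ d = 0 := by
    rw [show [1, 0] = [1] ++ [0] from rfl,
      List.suffix_append_inj_of_length_eq (s₁ := [0]) (s₂ := [d]) rfl,
      List.singleton_suffix_iff_getLast?_eq_some, getLast?_baseExp hp]
    simp [eq_comm]
  rw [eCount, eCount, baseExp_mul_add hp hm hd, occCount_append_singleton]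
  simp only [hsuffix]

-- The last term counts the factor `10` across the junction: `t` written with `k + 1` digits
-- (leading zeros allowed) starts with `0` exactly when `t < p ^ k`.
lemma eCount_mul_pow_add {p : ℕ} (hp : 2 ≤ p) (m k : ℕ) {t : ℕ} (ht : t < p ^ (k + 1)) :
    eCount p [1, 0] (m * p ^ (k + 1) + t) =
      eCount p [1, 0] m + eCount p [1, 0] t + if m % p = 1 ∧ t < p ^ k then 1 else 0 := by
  induction k generalizing t with
  | zero =>
    rw [pow_one] at ht
    rw [pow_one, mul_comm, eCount_mul_add hp m ht, eCount_of_lt ht, pow_zero, add_zero]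
    simp only [Nat.lt_one_iff]
  | succ k ih =>
    have hp0 : 0 < p := by omega
    have hq : t / p < p ^ (k + 1) := by
      rwa [Nat.div_lt_iff_lt_mul hp0, ← pow_succ]
    have hd : t % p < p := Nat.mod_lt t hp0
    have hsplit : m * p ^ (k + 2) + t = p * (m * p ^ (k + 1) + t / p) + t % p := by
      conv_lhs => rw [← Nat.div_add_mod t p]
      ring
    have hmod : (m * p ^ (k + 1) + t / p) % p = t / p % p := by
      rw [pow_succ, ← mul_assoc, Nat.mul_add_mod_self_right]
    have hcmp : t / p < p ^ k ↔ t < p ^ (k + 1) := by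
      rw [Nat.div_lt_iff_lt_mul hp0, ← pow_succ]
    have het : eCount p [1, 0] t = eCount p [1, 0] (t / p) +
        if t / p % p = 1 ∧ t % p = 0 then 1 else 0 := by
      conv_lhs => rw [← Nat.div_add_mod t p]
      exact eCount_mul_add hp _ hd
    rw [hsplit, eCount_mul_add hp _ hd, ih hq, hmod, het]
    simp only [hcmp]
    ring

lemma eCount_pow_succ {p : ℕ} (hp : 2 ≤ p) (k : ℕ) : eCount p [1, 0] (p ^ (k + 1)) = 1 := by
  have h := eCount_mul_pow_add hp 1 k (t := 0) (by positivity)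
  rwa [one_mul, add_zero, eCount_of_lt (by omega : 1 < p), eCount_of_lt (by omega : 0 < p),
    if_pos ⟨Nat.mod_eq_of_lt (by omega), by positivity⟩] at h

def IsPeriodicBelow (s : ℕ → ℕ) (L N : ℕ) : Prop := ∀ n, n + L < N → s n = s (n + L)

lemma IsPrefixSeq.isPeriodicBelow_flatten_replicate {v : List ℕ} {s : ℕ → ℕ} {q : ℕ}
    (h : IsPrefixSeq (List.replicate q v).flatten s) :
    IsPeriodicBelow s v.length (q * v.length) := by
  intro n hn
  obtain ⟨c, rfl⟩ : ∃ c, q = c + 1 := Nat.exists_eq_succ_of_ne_zero (by rintro rfl; omega)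
  have hsnoc : (List.replicate (c + 1) v).flatten = (List.replicate c v).flatten ++ v := by
    simp [List.replicate_succ']
  have hcons : (List.replicate (c + 1) v).flatten = v ++ (List.replicate c v).flatten := by
    simp [List.replicate_succ]
  have hlen : ((List.replicate c v).flatten).length = c * v.length := by simp
  calc s n = (List.replicate (c + 1) v).flatten.getD n 0 := h n (by simp; nlinarith)
    _ = (List.replicate c v).flatten.getD n 0 := by
      rw [hsnoc, List.getD_append _ _ _ _ (by rw [hlen]; nlinarith)]
    _ = (List.replicate (c + 1) v).flatten.getD (n + v.length) 0 := by
      rw [hcons, List.getD_append_right _ _ _ _ (by omega), Nat.add_sub_cancel]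
    _ = s (n + v.length) := (h _ (by simpa [add_mul, add_comm] using hn)).symm

lemma aSeq_pow_succ {p : ℕ} (hp : 2 ≤ p) (k : ℕ) : aSeq p [1, 0] (p ^ (k + 1)) = 1 := by
  rw [aSeq, eCount_pow_succ hp, Nat.mod_eq_of_lt (by omega)]

lemma not_isPeriodicBelow_of_succ_lt {p b k r L : ℕ} (hp : 3 ≤ p) (hb : 1 ≤ b)
    (hbp : b + 1 < p) (hr : r < p ^ (k + 1)) (hL : L = b * p ^ (k + 1) + r) :
    ¬ IsPeriodicBelow (aSeq p [1, 0]) L (p * L) := by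
  intro h
  have hpowL : p ^ (k + 1) ≤ L := by nlinarith
  have hshift : eCount p [1, 0] (p ^ (k + 1) + L) = eCount p [1, 0] r := by
    rw [show p ^ (k + 1) + L = (b + 1) * p ^ (k + 1) + r by rw [hL]; ring,
      eCount_mul_pow_add (by omega) _ _ hr, eCount_of_lt hbp, Nat.mod_eq_of_lt hbp,
      if_neg (by omega), zero_add, add_zero]
  have hEr : eCount p [1, 0] r ≡ 1 [MOD p] := by
    have h1 := h (p ^ (k + 1)) (by nlinarith)
    rw [aSeq_pow_succ (by omega), aSeq, hshift] at h1
    rw [Nat.ModEq, ← h1, Nat.mod_eq_of_lt (by omega)]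
  have h0 := h 0 (by nlinarith)
  rw [zero_add, aSeq, aSeq, eCount_of_lt (by omega : 0 < p), hL,
    eCount_mul_pow_add (by omega) _ _ hr, eCount_of_lt (by omega : b < p), zero_add] at h0
  have hc : (if b % p = 1 ∧ r < p ^ k then 1 else 0) ≤ 1 := by split_ifs <;> omega
  generalize (if b % p = 1 ∧ r < p ^ k then 1 else 0) = c at h0 hc
  have h1c : 1 + c ≡ 0 [MOD p] := (hEr.add_right c).symm.trans h0.symm
  rw [Nat.ModEq, Nat.zero_mod, Nat.mod_eq_of_lt (by omega)] at h1c
  omega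

lemma not_isPeriodicBelow_of_succ_eq {p b k r L : ℕ} (hp : 3 ≤ p) (hbp : b + 1 = p)
    (hr : r < p ^ (k + 1)) (hL : L = b * p ^ (k + 1) + r) :
    ¬ IsPeriodicBelow (aSeq p [1, 0]) L (p * L) := by
  intro h
  have hpow : p ^ (k + 2) = (b + 1) * p ^ (k + 1) := by rw [hbp]; ring
  have hshift₁ : eCount p [1, 0] (p ^ (k + 1) + L) = eCount p [1, 0] r + 1 := by
    rw [show p ^ (k + 1) + L = 1 * p ^ (k + 2) + r by rw [hL, hpow]; ring,
      eCount_mul_pow_add (by omega) _ _ (by rw [hpow]; nlinarith),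
      eCount_of_lt (by omega : 1 < p), if_pos ⟨Nat.mod_eq_of_lt (by omega), hr⟩, zero_add]
  have hshift₂ : eCount p [1, 0] (p ^ (k + 2) + L) = eCount p [1, 0] r := by
    rw [show p ^ (k + 2) + L = (p * 1 + b) * p ^ (k + 1) + r by rw [hL]; ring,
      eCount_mul_pow_add (by omega) _ _ hr, eCount_mul_add (by omega) _ (by omega : b < p),
      eCount_of_lt (by omega : 1 < p), if_neg (by omega), Nat.mul_add_mod,
      Nat.mod_eq_of_lt (by omega : b < p), if_neg (by omega), zero_add, add_zero, zero_add]
  have hEr : eCount p [1, 0] r ≡ 0 [MOD p] := by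
    have h1 := h (p ^ (k + 1)) (by nlinarith)
    rw [aSeq_pow_succ (by omega), aSeq, hshift₁] at h1
    refine Nat.ModEq.add_right_cancel' 1 ?_
    rw [Nat.ModEq, ← h1, zero_add, Nat.mod_eq_of_lt (by omega)]
  have h2 := h (p ^ (k + 2)) (by nlinarith)
  rw [aSeq_pow_succ (by omega), aSeq, hshift₂] at h2
  rw [Nat.ModEq, Nat.zero_mod] at hEr
  omega

lemma aSeq_not_isPeriodicBelow {p L : ℕ} (hp : 3 ≤ p) (hL : p ≤ L) :
    ¬ IsPeriodicBelow (aSeq p [1, 0]) L (p * L) := by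
  obtain ⟨k, hk⟩ : ∃ k, Nat.log p L = k + 1 :=
    Nat.exists_eq_succ_of_ne_zero (Nat.log_pos (by omega) hL).ne'
  have hlow : p ^ (k + 1) ≤ L := hk ▸ Nat.pow_log_le_self p (by omega)
  have hhigh : L < p ^ (k + 1) * p := by
    rw [← pow_succ, ← hk]; exact Nat.lt_pow_succ_log_self (by omega) L
  have hpos : 0 < p ^ (k + 1) := by positivity
  have hdecomp : L = L / p ^ (k + 1) * p ^ (k + 1) + L % p ^ (k + 1) := (Nat.div_add_mod' L _).symm
  have hb : 1 ≤ L / p ^ (k + 1) := (Nat.one_le_div_iff hpos).mpr hlow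
  have hbp : L / p ^ (k + 1) < p := (Nat.div_lt_iff_lt_mul hpos).mpr (by rwa [mul_comm])
  have hr := Nat.mod_lt L hpos
  rcases (Nat.succ_le_of_lt hbp).lt_or_eq with hlt | heq
  · exact not_isPeriodicBelow_of_succ_lt hp hb hlt hr hdecomp
  · exact not_isPeriodicBelow_of_succ_eq hp heq hr hdecomp

lemma IsPrefixSeq.eq_map_range {u : List ℕ} {s : ℕ → ℕ} (h : IsPrefixSeq u s) :
    u = (List.range u.length).map s := by
  refine List.ext_getElem (by simp) fun i hi _ => ?_
  rw [List.getElem_map, List.getElem_range, h i hi, List.getD_eq_getElem _ _ hi]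

lemma length_flatMap_map_range (φ : ℕ → List ℕ) (s : ℕ → ℕ) (n : ℕ) :
    (((List.range n).map s).flatMap φ).length = morphPrefixLen φ s n := by
  induction n with
  | zero => simp [morphPrefixLen]
  | succ n ih => simp [List.range_succ, ih, morphPrefixLen, Finset.sum_range_succ]

lemma IsMorphFixedPoint.isPrefixSeq_flatMap_map_range {φ : ℕ → List ℕ} {s : ℕ → ℕ}
    (hfix : IsMorphFixedPoint φ s) (n : ℕ) :
    IsPrefixSeq (((List.range n).map s).flatMap φ) s := by
  induction n with
  | zero => intro i hi; simp at hi
  | succ n ih =>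
    intro i hi
    have happ : ((List.range (n + 1)).map s).flatMap φ =
        ((List.range n).map s).flatMap φ ++ φ (s n) := by
      simp [List.range_succ]
    rw [happ, List.length_append, length_flatMap_map_range] at hi
    rw [happ]
    by_cases hin : i < morphPrefixLen φ s n
    · rw [List.getD_append _ _ _ _ (by rwa [length_flatMap_map_range]),
        ih i (by rwa [length_flatMap_map_range])]
    · rw [List.getD_append_right _ _ _ _ (by rw [length_flatMap_map_range]; omega),
        length_flatMap_map_range, ← hfix n _ (by omega), Nat.add_sub_of_le (by omega)]

lemma IsMorphFixedPoint.isPrefixSeq_flatMap {φ : ℕ → List ℕ} {s : ℕ → ℕ} {u : List ℕ}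
    (hfix : IsMorphFixedPoint φ s) (hu : IsPrefixSeq u s) : IsPrefixSeq (u.flatMap φ) s := by
  rw [hu.eq_map_range]
  exact hfix.isPrefixSeq_flatMap_map_range u.length

lemma IsPrefixSeq.length_lt_length_flatMap {φ : ℕ → List ℕ} {s : ℕ → ℕ} {u : List ℕ}
    (hu : IsPrefixSeq u s) (hne : u ≠ []) (hφ : ∀ n, φ (s n) ≠ [])
    (h0 : 2 ≤ (φ (s 0)).length) :
    u.length < (u.flatMap φ).length := by
  obtain ⟨n, hn⟩ := Nat.exists_eq_succ_of_ne_zero (List.length_pos_iff.mpr hne).ne'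
  conv_rhs => rw [hu.eq_map_range]
  rw [length_flatMap_map_range, hn, morphPrefixLen, Finset.sum_range_succ']
  have : n ≤ ∑ j ∈ Finset.range n, (φ (s (j + 1))).length :=
    calc n = ∑ j ∈ Finset.range n, 1 := by simp
      _ ≤ _ := Finset.sum_le_sum fun j _ => List.length_pos_iff.mpr (hφ (j + 1))
  omega

lemma flatMap_flatten_replicate (φ : ℕ → List ℕ) (q : ℕ) (w : List ℕ) :
    (List.replicate q w).flatten.flatMap φ = (List.replicate q (w.flatMap φ)).flatten := by
  rw [List.flatten_eq_flatMap, List.flatMap_assoc, List.flatMap_replicate]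
  rfl

lemma PurelyMorphic.exists_isPrefixSeq_flatten_replicate {p q : ℕ} {s : ℕ → ℕ}
    (h : PurelyMorphic p s) (hs : ∀ n, s n < p) (hconst : ∀ n < q, s n = s 0) (N : ℕ) :
    ∃ v : List ℕ, N < v.length ∧ IsPrefixSeq (List.replicate q v).flatten s := by
  obtain ⟨φ, hφ, h0, hfix⟩ := h
  have hne : ∀ n, φ (s n) ≠ [] := fun n => (hφ _ (hs n)).1
  set F : List ℕ → List ℕ := fun u => u.flatMap φ
  have hpre : ∀ j, IsPrefixSeq (F^[j] [s 0]) s := by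
    intro j
    induction j with
    | zero =>
      intro n hn
      rw [Function.iterate_zero_apply, List.length_singleton, Nat.lt_one_iff] at hn
      simp [hn]
    | succ j ih => rw [Function.iterate_succ_apply']; exact hfix.isPrefixSeq_flatMap ih
  have hlen : ∀ j, j < (F^[j] [s 0]).length := by
    intro j
    induction j with
    | zero => simp
    | succ j ih =>
      rw [Function.iterate_succ_apply']
      exact lt_of_le_of_lt ih <|
        (hpre j).length_lt_length_flatMap (List.ne_nil_of_length_pos (by omega)) hne h0
  have hrep : ∀ j, IsPrefixSeq (List.replicate q (F^[j] [s 0])).flatten s := by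
    intro j
    induction j with
    | zero =>
      intro n hn
      rw [Function.iterate_zero_apply, List.flatten_replicate_singleton,
        List.length_replicate] at hn
      simp [hconst n hn, hn]
    | succ j ih =>
      rw [Function.iterate_succ_apply', ← flatMap_flatten_replicate]
      exact hfix.isPrefixSeq_flatMap ih
  exact ⟨F^[N] [s 0], hlen N, hrep N⟩

theorem stmt18_general (p : ℕ) (hp3 : 3 ≤ p) :
    (∀ v : List ℕ, p ^ 2 < v.length →
      ¬ IsPrefixSeq ((List.replicate p v).flatten) (aSeq p [1, 0])) ∧
    ¬ PurelyMorphic p (aSeq p [1, 0]) := by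
  have hnoPrefix : ∀ v : List ℕ, p ^ 2 < v.length →
      ¬ IsPrefixSeq ((List.replicate p v).flatten) (aSeq p [1, 0]) := fun v hv h =>
    aSeq_not_isPeriodicBelow hp3 (by nlinarith) h.isPeriodicBelow_flatten_replicate
  refine ⟨hnoPrefix, fun hmorph => ?_⟩
  have hconst : ∀ n < p, aSeq p [1, 0] n = aSeq p [1, 0] 0 := fun n hn => by
    rw [aSeq, aSeq, eCount_of_lt hn, eCount_of_lt (by omega : 0 < p)]
  obtain ⟨v, hv, hpre⟩ :=
    hmorph.exists_isPrefixSeq_flatten_replicate (fun n => Nat.mod_lt _ (by omega)) hconst (p ^ 2)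
  exact hnoPrefix v hv hpre

theorem stmt18 (p : ℕ) (hp : p.Prime) (hp3 : 3 ≤ p) :
    (∀ v : List ℕ, p ^ 2 < v.length →
      ¬ IsPrefixSeq ((List.replicate p v).flatten) (aSeq p [1, 0])) ∧
    ¬ PurelyMorphic p (aSeq p [1, 0]) :=
  stmt18_general p hp3
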